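/- arXiv:1510.02533 — 3 statements merged into one kernel-verified Lean document; each statement's English description precedes it below -/
import Mathlib

section
/- Under the SAGA setup with each f_i additionally μ-strongly convex (0 < μ ≤ L), initialize φ_i^0 = x^0 for all i and run k SAGA update steps, choosing the index at each step independently and uniformly at random (so E below is the average over all n^k index sequences). For step size γ = 1/(2(μn + L)): E‖x^k − x*‖² ≤ (1 − μ/(2(μn + L)))^k [‖x^0 − x*‖² + (n/(μn + L))(f(x^0) − ⟨∇f(x*), x^0 − x*⟩ − f(x*))]. For step size γ = 1/(3L): E‖x^k − x*‖² ≤ (1 − min{1/(4n), μ/(3L)})^k [‖x^0 − x*‖² + (2n/(3L))(f(x^0) − ⟨∇f(x*), x^0 − x*⟩ − f(x*))]. -/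
open scoped RealInnerProductSpace

/-- The SAGA pre-proximal point `w^(j)` for iterate `x`, table `φ` and index `j`. -/
noncomputable def sagaW (d n : ℕ) (γ : ℝ)
    (f' : Fin n → EuclideanSpace ℝ (Fin d) → EuclideanSpace ℝ (Fin d))
    (x : EuclideanSpace ℝ (Fin d)) (φ : Fin n → EuclideanSpace ℝ (Fin d))
    (j : Fin n) : EuclideanSpace ℝ (Fin d) :=
  x - γ • (f' j x - f' j (φ j) + (1 / (n : ℝ)) • ∑ i, f' i (φ i))

/-- The SAGA state (iterate, table) after `k` update steps with index sequence `js`,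
where `prox` is the proximal operator of `h` with weight `1/γ`. -/
noncomputable def sagaIter (d n : ℕ) (γ : ℝ)
    (f' : Fin n → EuclideanSpace ℝ (Fin d) → EuclideanSpace ℝ (Fin d))
    (prox : EuclideanSpace ℝ (Fin d) → EuclideanSpace ℝ (Fin d))
    (x0 : EuclideanSpace ℝ (Fin d)) (js : ℕ → Fin n) :
    ℕ → EuclideanSpace ℝ (Fin d) × (Fin n → EuclideanSpace ℝ (Fin d))
  | 0 => (x0, fun _ => x0)
  | k + 1 =>
      (prox (sagaW d n γ f' (sagaIter d n γ f' prox x0 js k).1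
          (sagaIter d n γ f' prox x0 js k).2 (js k)),
       Function.update (sagaIter d n γ f' prox x0 js k).2 (js k)
          (sagaIter d n γ f' prox x0 js k).1)

/-- Extends a finite index sequence to an infinite one (the tail is irrelevant). -/
def extSeq {n : ℕ} (hn : 0 < n) {k : ℕ} (js : Fin k → Fin n) : ℕ → Fin n :=
  fun t => if h : t < k then js ⟨t, h⟩ else ⟨0, hn⟩

/-!
The argument is the Lyapunov analysis of Defazio, Bach and Lacoste-Julien. With the Bregman
divergences `Dᵢ(y, x*) = fᵢ y - fᵢ x* - ⟪∇fᵢ x*, y - x*⟫` of the table entries, the quantity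
`T = ‖x - x*‖² + 2γ(1 - γμ) ∑ᵢ Dᵢ(φᵢ, x*)` contracts by `1 - ρ` on average over the next index.
Three facts drive the one-step bound: the proximal map is the resolvent of `∂h`, hence
nonexpansive, and `x*` is its value at `x* - γ ∇f(x*)`; the second moment of the SAGA gradient
estimator is split by Young's inequality and bounded through co-coercivity,
`‖∇fᵢ y - ∇fᵢ x*‖² ≤ 2 Lt Dᵢ(y, x*)`; and co-coercivity of `∇(fᵢ - μ/2 ‖·‖²)` strengthens the
strong monotonicity of `∇fᵢ`. Iterating over all `n ^ k` index sequences gives the geometric rate;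
each step size is an admissible choice of `(γ, Lt, ρ)`, with `Lt ≥ L` taken strictly above `μ`.
-/

open Filter Topology

lemma le_of_forall_mem_Ioo_le_add_mul {a b C : ℝ} (h : ∀ t ∈ Set.Ioo (0 : ℝ) 1, a ≤ b + t * C) :
    a ≤ b := by
  have hlim : Tendsto (fun t : ℝ => b + t * C) (𝓝[>] 0) (𝓝 b) := by
    have : Continuous fun t : ℝ => b + t * C := by fun_prop
    simpa using (this.tendsto 0).mono_left nhdsWithin_le_nhds
  exact ge_of_tendsto hlim (eventually_of_mem (Ioo_mem_nhdsGT one_pos) h)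

lemma exists_young_weight {γ μ Lt ρ n : ℝ} (hγ : 0 < γ) (hμLt : μ < Lt) (hγLt : γ * Lt < 1)
    (hrate : γ * Lt ≤ (1 - γ * Lt) * (1 - n * ρ)) :
    ∃ β > 0, γ ^ 2 * (1 + β) * (Lt - μ) = γ * (1 - γ * μ)
      ∧ γ * Lt * (1 + β⁻¹) ≤ (1 - γ * μ) * (1 - n * ρ) := by
  have hr : 0 < Lt - μ := sub_pos.2 hμLt
  refine ⟨(1 - γ * Lt) / (γ * (Lt - μ)), div_pos (by linarith) (mul_pos hγ hr), ?_, ?_⟩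
  · field_simp
    ring
  · rw [inv_div, one_add_div (by linarith), show 1 - γ * Lt + γ * (Lt - μ) = 1 - γ * μ by ring,
      mul_div_assoc', div_le_iff₀ (by linarith)]
    nlinarith [mul_le_mul_of_nonneg_left hrate (show 0 ≤ 1 - γ * μ by nlinarith)]

lemma sum_apply_update {ι α : Type*} [Fintype ι] [DecidableEq ι] (g : ι → α → ℝ) (φ : ι → α)
    (j : ι) (x : α) :
    ∑ i, g i (Function.update φ j x i) = ∑ i, g i (φ i) - g j (φ j) + g j x := by
  rw [Finset.sum_congr rfl fun i _ => Function.apply_update g φ j x i,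
    Finset.sum_update_of_mem (Finset.mem_univ j), ← Finset.add_sum_erase _ _ (Finset.mem_univ j),
    Finset.sdiff_singleton_eq_erase]
  ring

section InnerProductSpace

variable {E : Type*} [NormedAddCommGroup E] [InnerProductSpace ℝ E]

def bregmanDiv (φ : E → ℝ) (φ' : E → E) (a b : E) : ℝ := φ a - φ b - ⟪φ' b, a - b⟫

def HasSubgradientAt (h : E → ℝ) (u p : E) : Prop := ∀ q, h p + ⟪u, q - p⟫ ≤ h q

lemma ConvexOn.hasSubgradientAt_neg_of_isMinOn_add {h ψ : E → ℝ} (hh : ConvexOn ℝ Set.univ h)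
    {p g : E} {M : ℝ} (hψ : ∀ y, ψ y ≤ ψ p + ⟪g, y - p⟫ + M / 2 * ‖y - p‖ ^ 2)
    (hmin : ∀ y, ψ p + h p ≤ ψ y + h y) : HasSubgradientAt h (-g) p := by
  intro q
  suffices h p - h q ≤ ⟪g, q - p⟫ by rw [inner_neg_left]; linarith
  refine le_of_forall_mem_Ioo_le_add_mul (C := M / 2 * ‖q - p‖ ^ 2) fun t ⟨ht0, ht1⟩ => ?_
  have hseg : h (p + t • (q - p)) ≤ (1 - t) * h p + t * h q := by
    have := hh.2 (Set.mem_univ p) (Set.mem_univ q) (sub_nonneg.2 ht1.le) ht0.le (by ring)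
    rwa [show (1 - t) • p + t • q = p + t • (q - p) by module] at this
  have hquad := hψ (p + t • (q - p))
  have hm := hmin (p + t • (q - p))
  simp only [add_sub_cancel_left, inner_smul_right, norm_smul, Real.norm_eq_abs,
    abs_of_pos ht0, mul_pow] at hquad
  have : t * (h p - h q) ≤ t * (⟪g, q - p⟫ + t * (M / 2 * ‖q - p‖ ^ 2)) := by nlinarith
  exact le_of_mul_le_mul_left this ht0

lemma hasSubgradientAt_of_isMinOn_add_sq {h : E → ℝ} (hh : ConvexOn ℝ Set.univ h) {γ : ℝ}
    (hγ : 0 < γ) {p w : E}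
    (hmin : ∀ y, h p + 1 / (2 * γ) * ‖p - w‖ ^ 2 ≤ h y + 1 / (2 * γ) * ‖y - w‖ ^ 2) :
    HasSubgradientAt h (γ⁻¹ • (w - p)) p := by
  have hquad : ∀ y, 1 / (2 * γ) * ‖y - w‖ ^ 2 ≤ 1 / (2 * γ) * ‖p - w‖ ^ 2
      + ⟪γ⁻¹ • (p - w), y - p⟫ + γ⁻¹ / 2 * ‖y - p‖ ^ 2 := fun y => by
    rw [show y - w = (p - w) + (y - p) by abel, norm_add_sq_real, real_inner_smul_left]
    apply le_of_eq
    field_simp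
  have := hh.hasSubgradientAt_neg_of_isMinOn_add hquad fun y => by linarith [hmin y]
  rwa [← smul_neg, neg_sub] at this

/-- `pᵢ` is the resolvent `(id + γ ∂h)⁻¹` of `pᵢ + γ • uᵢ`; monotonicity of `∂h` makes it
nonexpansive. -/
lemma HasSubgradientAt.norm_sub_le {h : E → ℝ} {u₁ u₂ p₁ p₂ : E} {γ : ℝ} (hγ : 0 ≤ γ)
    (h₁ : HasSubgradientAt h u₁ p₁) (h₂ : HasSubgradientAt h u₂ p₂) :
    ‖p₁ - p₂‖ ≤ ‖(p₁ + γ • u₁) - (p₂ + γ • u₂)‖ := by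
  have hmono : 0 ≤ ⟪p₁ - p₂, u₁ - u₂⟫ := by
    have h₁₂ := h₁ p₂
    have h₂₁ := h₂ p₁
    simp only [inner_sub_left, inner_sub_right, real_inner_comm] at h₁₂ h₂₁ ⊢
    linarith
  rw [show (p₁ + γ • u₁) - (p₂ + γ • u₂) = (p₁ - p₂) + γ • (u₁ - u₂) by module]
  refine le_of_pow_le_pow_left₀ two_ne_zero (norm_nonneg _) ?_
  rw [norm_add_sq_real, inner_smul_right, norm_smul]
  nlinarith [mul_nonneg hγ hmono]

lemma bregmanDiv_le_of_lipschitz_gradient [CompleteSpace E] {φ : E → ℝ} {φ' : E → E} {M : ℝ}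
    (hgrad : ∀ x, HasGradientAt φ (φ' x) x) (hlip : ∀ x y, ‖φ' x - φ' y‖ ≤ M * ‖x - y‖)
    (a b : E) : bregmanDiv φ φ' a b ≤ M / 2 * ‖a - b‖ ^ 2 := by
  set v := a - b
  -- the remainder of the quadratic model along the segment `t ↦ b + t • v` is antitone for `t ≥ 0`
  let ψ : ℝ → ℝ := fun t => φ (b + t • v) - (t * ⟪φ' b, v⟫ + M / 2 * t ^ 2 * ‖v‖ ^ 2)
  let ψ' : ℝ → ℝ := fun t => ⟪φ' (b + t • v), v⟫ - (⟪φ' b, v⟫ + M * t * ‖v‖ ^ 2)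
  have hψ : ∀ t, HasDerivAt ψ (ψ' t) t := fun t => by
    have hline : HasDerivAt (fun t : ℝ => b + t • v) v t := by
      simpa using ((hasDerivAt_id t).smul_const v).const_add b
    have hφ := (hgrad (b + t • v)).hasFDerivAt.comp_hasDerivAt t hline
    have hq := ((hasDerivAt_id t).mul_const ⟪φ' b, v⟫).add
      (((hasDerivAt_pow 2 t).const_mul (M / 2)).mul_const (‖v‖ ^ 2))
    exact (hφ.sub hq).congr_deriv (by simp only [ψ', InnerProductSpace.toDual_apply_apply]; ring)
  have hψ'_nonpos : ∀ t ∈ interior (Set.Ici (0 : ℝ)), ψ' t ≤ 0 := by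
    intro t ht
    rw [interior_Ici] at ht
    have hCS := real_inner_le_norm (φ' (b + t • v) - φ' b) v
    have hL := hlip (b + t • v) b
    rw [add_sub_cancel_left, norm_smul, Real.norm_eq_abs, abs_of_pos ht] at hL
    simp only [ψ', sub_add_eq_sub_sub, ← inner_sub_left]
    nlinarith [mul_le_mul_of_nonneg_right hL (norm_nonneg v)]
  have hanti := antitoneOn_of_hasDerivWithinAt_nonpos (convex_Ici 0)
    (fun t _ => (hψ t).continuousAt.continuousWithinAt)
    (fun t _ => (hψ t).hasDerivWithinAt) hψ'_nonpos
  have h01 := hanti (Set.self_mem_Ici) (show (1 : ℝ) ∈ Set.Ici 0 by norm_num) zero_le_one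
  simp only [ψ, zero_smul, add_zero, one_smul, zero_mul, sub_zero, one_pow, mul_one,
    ne_eq, OfNat.ofNat_ne_zero, not_false_eq_true, zero_pow, mul_zero] at h01
  rw [show b + v = a by simp [v]] at h01
  simp only [bregmanDiv]
  linarith

lemma bregmanDiv_three_point (φ : E → ℝ) (φ' : E → E) (a b z : E) :
    bregmanDiv φ φ' z b = bregmanDiv φ φ' z a + bregmanDiv φ φ' a b + ⟪φ' a - φ' b, z - a⟫ := by
  simp only [bregmanDiv, inner_sub_left, inner_sub_right]
  ring

lemma bregmanDiv_add_bregmanDiv (φ : E → ℝ) (φ' : E → E) (a b : E) :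
    bregmanDiv φ φ' a b + bregmanDiv φ φ' b a = ⟪φ' a - φ' b, a - b⟫ := by
  simp only [bregmanDiv, inner_sub_left, inner_sub_right, real_inner_comm]
  ring

lemma bregmanDiv_sub_half_sq (φ : E → ℝ) (φ' : E → E) (μ : ℝ) (a b : E) :
    bregmanDiv (fun y => φ y - μ / 2 * ‖y‖ ^ 2) (fun y => φ' y - μ • y) a b
      = bregmanDiv φ φ' a b - μ / 2 * ‖a - b‖ ^ 2 := by
  simp only [bregmanDiv, inner_sub_left, real_inner_smul_left, norm_sub_sq_real, inner_sub_right,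
    real_inner_self_eq_norm_sq, real_inner_comm a b]
  ring

lemma norm_sub_sq_le_bregmanDiv {φ : E → ℝ} {φ' : E → E} {M : ℝ} (hM : 0 < M)
    (hlow : ∀ a b, 0 ≤ bregmanDiv φ φ' a b) (hup : ∀ a b, bregmanDiv φ φ' a b ≤ M / 2 * ‖a - b‖ ^ 2)
    (a b : E) : ‖φ' a - φ' b‖ ^ 2 ≤ 2 * M * bregmanDiv φ φ' a b := by
  set z := a - M⁻¹ • (φ' a - φ' b)
  have hza : z - a = -(M⁻¹ • (φ' a - φ' b)) := by simp [z]
  have h3 := bregmanDiv_three_point φ φ' a b z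
  have h0 := hlow z b
  have hq := hup z a
  rw [hza, inner_neg_right, real_inner_smul_right, real_inner_self_eq_norm_sq] at h3
  rw [hza, norm_neg, norm_smul, Real.norm_eq_abs, abs_inv, abs_of_pos hM, mul_pow] at hq
  have : 0 ≤ bregmanDiv φ φ' a b - ‖φ' a - φ' b‖ ^ 2 / (2 * M) := by
    have e : M / 2 * ((M⁻¹) ^ 2 * ‖φ' a - φ' b‖ ^ 2) - M⁻¹ * ‖φ' a - φ' b‖ ^ 2
        = -(‖φ' a - φ' b‖ ^ 2 / (2 * M)) := by field_simp; ring
    linarith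
  rw [sub_nonneg, div_le_iff₀ (by positivity)] at this
  linarith

lemma bregmanDiv_add_norm_sq_le_inner {φ : E → ℝ} {φ' : E → E} {μ M : ℝ} (hμM : μ < M)
    (hsc : ∀ a b, μ / 2 * ‖a - b‖ ^ 2 ≤ bregmanDiv φ φ' a b)
    (hup : ∀ a b, bregmanDiv φ φ' a b ≤ M / 2 * ‖a - b‖ ^ 2) (x z : E) :
    bregmanDiv φ φ' x z + μ / 2 * ‖x - z‖ ^ 2 + ‖(φ' x - φ' z) - μ • (x - z)‖ ^ 2 / (2 * (M - μ))
      ≤ ⟪φ' x - φ' z, x - z⟫ := by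
  -- co-coercivity for `φ - μ/2 ‖·‖²`, which is convex with `(M - μ)`-Lipschitz gradient
  have hcoco := norm_sub_sq_le_bregmanDiv (φ := fun y => φ y - μ / 2 * ‖y‖ ^ 2)
    (φ' := fun y => φ' y - μ • y) (sub_pos.2 hμM)
    (fun a b => by rw [bregmanDiv_sub_half_sq]; linarith [hsc a b])
    (fun a b => by rw [bregmanDiv_sub_half_sq]; linarith [hup a b]) z x
  rw [bregmanDiv_sub_half_sq, norm_sub_rev,
    show φ' x - μ • x - (φ' z - μ • z) = (φ' x - φ' z) - μ • (x - z) by module] at hcoco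
  rw [← div_le_iff₀' (by linarith), norm_sub_rev z x] at hcoco
  linarith [bregmanDiv_add_bregmanDiv φ φ' x z]

lemma norm_sub_sq_le_add_mul (A B : E) {β : ℝ} (hβ : 0 < β) :
    ‖A - B‖ ^ 2 ≤ (1 + β) * ‖A‖ ^ 2 + (1 + β⁻¹) * ‖B‖ ^ 2 := by
  have hAB : -(2 * ⟪A, B⟫) ≤ β * ‖A‖ ^ 2 + β⁻¹ * ‖B‖ ^ 2 := by
    have hsq : 0 ≤ ‖β • A + B‖ ^ 2 := sq_nonneg _
    rw [norm_add_sq_real, norm_smul, real_inner_smul_left, Real.norm_eq_abs, abs_of_pos hβ,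
      mul_pow] at hsq
    have : 0 ≤ β⁻¹ * (β ^ 2 * ‖A‖ ^ 2 + 2 * (β * ⟪A, B⟫) + ‖B‖ ^ 2) :=
      mul_nonneg (inv_nonneg.2 hβ.le) hsq
    have e : β⁻¹ * (β ^ 2 * ‖A‖ ^ 2 + 2 * (β * ⟪A, B⟫) + ‖B‖ ^ 2)
        = β * ‖A‖ ^ 2 + 2 * ⟪A, B⟫ + β⁻¹ * ‖B‖ ^ 2 := by field_simp
    linarith
  rw [norm_sub_sq_real]
  linarith

lemma bregmanDiv_mean {n : ℕ} (f : Fin n → E → ℝ) (f' : Fin n → E → E) (a b : E) :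
    bregmanDiv (fun y => (1 / (n : ℝ)) * ∑ i, f i y) (fun y => (1 / (n : ℝ)) • ∑ i, f' i y) a b
      = (1 / (n : ℝ)) * ∑ i, bregmanDiv (f i) (f' i) a b := by
  simp only [bregmanDiv, real_inner_smul_left, sum_inner, Finset.sum_sub_distrib]
  ring

lemma hasSubgradientAt_neg_mean_of_isMin {n : ℕ} (hn : 0 < n) {f : Fin n → E → ℝ}
    {f' : Fin n → E → E} {h : E → ℝ} {xstar : E} {L : ℝ}
    (hup : ∀ i a b, bregmanDiv (f i) (f' i) a b ≤ L / 2 * ‖a - b‖ ^ 2)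
    (hh : ConvexOn ℝ Set.univ h)
    (hstar : ∀ y, (1 / (n : ℝ)) * ∑ i, f i xstar + h xstar ≤ (1 / (n : ℝ)) * ∑ i, f i y + h y) :
    HasSubgradientAt h (-((1 / (n : ℝ)) • ∑ i, f' i xstar)) xstar := by
  refine hh.hasSubgradientAt_neg_of_isMinOn_add (ψ := fun y => (1 / (n : ℝ)) * ∑ i, f i y)
    (M := L) (fun y => ?_) hstar
  have hle : (1 / (n : ℝ)) * ∑ i, bregmanDiv (f i) (f' i) y xstar ≤ L / 2 * ‖y - xstar‖ ^ 2 :=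
    calc _ ≤ (1 / (n : ℝ)) * ∑ _i : Fin n, L / 2 * ‖y - xstar‖ ^ 2 := by
          gcongr with i; exact hup i y xstar
      _ = _ := by
          have : (n : ℝ) ≠ 0 := Nat.cast_ne_zero.2 hn.ne'
          rw [Finset.sum_const, Finset.card_univ, Fintype.card_fin, nsmul_eq_mul]
          field_simp
  rw [← bregmanDiv_mean, bregmanDiv] at hle
  linarith

variable {ι : Type*} [Fintype ι]

lemma sum_norm_sub_sq_eq (C : ι → E) {m : E} (hm : ∑ j, C j = (Fintype.card ι : ℝ) • m) (c : E) :
    ∑ j, ‖C j - c‖ ^ 2 = ∑ j, ‖C j - m‖ ^ 2 + Fintype.card ι * ‖m - c‖ ^ 2 := by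
  have hsplit : ∀ j, ‖C j - c‖ ^ 2 = ‖C j - m‖ ^ 2 + 2 * ⟪C j - m, m - c⟫ + ‖m - c‖ ^ 2 :=
    fun j => by rw [← norm_add_sq_real, sub_add_sub_cancel]
  have hcross : ∑ j, ⟪C j - m, m - c⟫ = 0 := by
    rw [← sum_inner, Finset.sum_sub_distrib, hm, Finset.sum_const, Finset.card_univ,
      ← Nat.cast_smul_eq_nsmul ℝ, sub_self, inner_zero_left]
  simp only [hsplit, Finset.sum_add_distrib, ← Finset.mul_sum, hcross, Finset.sum_const,
    Finset.card_univ, nsmul_eq_mul]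
  ring

lemma sum_norm_sub_add_mean_sq_le (Δ v : ι → E) (c : E) {β : ℝ} (hβ : 0 < β) :
    ∑ j, ‖Δ j - v j + (Fintype.card ι : ℝ)⁻¹ • ∑ i, v i‖ ^ 2
      ≤ ∑ j, ‖Δ j‖ ^ 2 + β * ∑ j, ‖Δ j - c‖ ^ 2 + (1 + β⁻¹) * ∑ j, ‖v j‖ ^ 2 := by
  have hmean : ∀ C : ι → E,
      ∑ j, C j = (Fintype.card ι : ℝ) • ((Fintype.card ι : ℝ)⁻¹ • ∑ i, C i) := by
    intro C
    rcases isEmpty_or_nonempty ι with hι | hι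
    · simp
    · rw [smul_smul, mul_inv_cancel₀ (Nat.cast_ne_zero.2 Fintype.card_ne_zero), one_smul]
  set u := (Fintype.card ι : ℝ)⁻¹ • ∑ i, Δ i
  set w := (Fintype.card ι : ℝ)⁻¹ • ∑ i, v i
  have he : ∑ j, (Δ j - v j + w) = (Fintype.card ι : ℝ) • u := by
    rw [← hmean Δ, Finset.sum_add_distrib, Finset.sum_sub_distrib, hmean v, Finset.sum_const,
      Finset.card_univ, ← Nat.cast_smul_eq_nsmul ℝ, sub_add_cancel]
  have hE := sum_norm_sub_sq_eq (fun j => Δ j - v j + w) he 0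
  have hΔ := sum_norm_sub_sq_eq Δ (hmean Δ) 0
  have hΔc := sum_norm_sub_sq_eq Δ (hmean Δ) c
  have hv := sum_norm_sub_sq_eq v (hmean v) 0
  simp only [sub_zero] at hE hΔ hv
  have hyoung : ∑ j, ‖Δ j - v j + w - u‖ ^ 2
      ≤ (1 + β) * ∑ j, ‖Δ j - u‖ ^ 2 + (1 + β⁻¹) * ∑ j, ‖v j - w‖ ^ 2 := by
    rw [Finset.mul_sum, Finset.mul_sum, ← Finset.sum_add_distrib]
    refine Finset.sum_le_sum fun j _ => ?_
    rw [show Δ j - v j + w - u = (Δ j - u) - (v j - w) by abel]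
    exact norm_sub_sq_le_add_mul _ _ hβ
  have hnn : 0 ≤ (Fintype.card ι : ℝ) * ‖u - c‖ ^ 2 := by positivity
  have hnn' : 0 ≤ (Fintype.card ι : ℝ) * ‖w‖ ^ 2 := by positivity
  have hβ' : 0 ≤ 1 + β⁻¹ := by positivity
  nlinarith

noncomputable def sagaLyapunov {n : ℕ} (f : Fin n → E → ℝ) (f' : Fin n → E → E) (xstar : E)
    (κ : ℝ) (s : E × (Fin n → E)) : ℝ :=
  ‖s.1 - xstar‖ ^ 2 + κ * ∑ i, bregmanDiv (f i) (f' i) (s.2 i) xstar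

end InnerProductSpace

section Saga

variable {d n : ℕ} (γ : ℝ) (f' : Fin n → EuclideanSpace ℝ (Fin d) → EuclideanSpace ℝ (Fin d))
  (prox : EuclideanSpace ℝ (Fin d) → EuclideanSpace ℝ (Fin d)) (x0 : EuclideanSpace ℝ (Fin d))

noncomputable def sagaStep (s : EuclideanSpace ℝ (Fin d) × (Fin n → EuclideanSpace ℝ (Fin d)))
    (j : Fin n) : EuclideanSpace ℝ (Fin d) × (Fin n → EuclideanSpace ℝ (Fin d)) :=
  (prox (sagaW d n γ f' s.1 s.2 j), Function.update s.2 j s.1)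

lemma sagaIter_succ (js : ℕ → Fin n) (k : ℕ) :
    sagaIter d n γ f' prox x0 js (k + 1)
      = sagaStep γ f' prox (sagaIter d n γ f' prox x0 js k) (js k) := rfl

lemma sagaIter_congr {js₁ js₂ : ℕ → Fin n} {k : ℕ} (h : ∀ t < k, js₁ t = js₂ t) :
    sagaIter d n γ f' prox x0 js₁ k = sagaIter d n γ f' prox x0 js₂ k := by
  induction k with
  | zero => rfl
  | succ k ih =>
    rw [sagaIter_succ, sagaIter_succ, ih fun t ht => h t (ht.trans k.lt_succ_self),
      h k k.lt_succ_self]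

lemma extSeq_snoc_of_lt (hn : 0 < n) {k : ℕ} (js : Fin k → Fin n) (j : Fin n) {t : ℕ}
    (ht : t < k) : extSeq hn (Fin.snoc js j : Fin (k + 1) → Fin n) t = extSeq hn js t := by
  simp only [extSeq, dif_pos ht, dif_pos (ht.trans k.lt_succ_self)]
  exact Fin.snoc_castSucc (α := fun _ => Fin n) (i := ⟨t, ht⟩) ..

lemma extSeq_snoc_self (hn : 0 < n) {k : ℕ} (js : Fin k → Fin n) (j : Fin n) :
    extSeq hn (Fin.snoc js j : Fin (k + 1) → Fin n) k = j := by
  simp only [extSeq, dif_pos k.lt_succ_self]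
  exact Fin.snoc_last (α := fun _ => Fin n) ..

lemma sagaIter_extSeq_snoc (hn : 0 < n) {k : ℕ} (js : Fin k → Fin n) (j : Fin n) :
    sagaIter d n γ f' prox x0 (extSeq hn (Fin.snoc js j : Fin (k + 1) → Fin n)) (k + 1)
      = sagaStep γ f' prox (sagaIter d n γ f' prox x0 (extSeq hn js) k) j := by
  rw [sagaIter_succ, extSeq_snoc_self,
    sagaIter_congr γ f' prox x0 fun t ht => extSeq_snoc_of_lt hn js j ht]

lemma sum_sagaIter_le (hn : 0 < n)
    (V : EuclideanSpace ℝ (Fin d) × (Fin n → EuclideanSpace ℝ (Fin d)) → ℝ) {r : ℝ} (hr : 0 ≤ r)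
    (hstep : ∀ s, ∑ j, V (sagaStep γ f' prox s j) ≤ r * V s) (k : ℕ) :
    ∑ js : Fin k → Fin n, V (sagaIter d n γ f' prox x0 (extSeq hn js) k)
      ≤ r ^ k * V (x0, fun _ => x0) := by
  induction k with
  | zero => simp [sagaIter]
  | succ k ih =>
    calc ∑ js : Fin (k + 1) → Fin n, V (sagaIter d n γ f' prox x0 (extSeq hn js) (k + 1))
        = ∑ js : Fin k → Fin n, ∑ j, V (sagaStep γ f' prox
            (sagaIter d n γ f' prox x0 (extSeq hn js) k) j) := by
          rw [← (Fin.snocEquiv fun _ => Fin n).sum_comp, Fintype.sum_prod_type, Finset.sum_comm]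
          exact Finset.sum_congr rfl fun js _ => Finset.sum_congr rfl fun j _ =>
            congrArg V (sagaIter_extSeq_snoc γ f' prox x0 hn js j)
      _ ≤ ∑ js : Fin k → Fin n, r * V (sagaIter d n γ f' prox x0 (extSeq hn js) k) :=
          Finset.sum_le_sum fun js _ => hstep _
      _ ≤ r ^ (k + 1) * V (x0, fun _ => x0) := by
          rw [← Finset.mul_sum, pow_succ', mul_assoc]
          exact mul_le_mul_of_nonneg_left ih hr

lemma sagaW_sub_eq (x xstar : EuclideanSpace ℝ (Fin d)) (φ : Fin n → EuclideanSpace ℝ (Fin d))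
    (j : Fin n) :
    sagaW d n γ f' x φ j - (xstar - γ • ((1 / (n : ℝ)) • ∑ i, f' i xstar))
      = (x - xstar) - γ • ((f' j x - f' j xstar) - (f' j (φ j) - f' j xstar)
          + (n : ℝ)⁻¹ • ∑ i, (f' i (φ i) - f' i xstar)) := by
  simp only [sagaW, Finset.sum_sub_distrib]
  module

variable {h : EuclideanSpace ℝ (Fin d) → ℝ} {xstar : EuclideanSpace ℝ (Fin d)}

lemma norm_prox_sagaW_sub_le (hγ : 0 < γ) (hh : ConvexOn ℝ Set.univ h)
    (hprox : ∀ w y, h (prox w) + 1 / (2 * γ) * ‖prox w - w‖ ^ 2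
        ≤ h y + 1 / (2 * γ) * ‖y - w‖ ^ 2)
    (hstar : HasSubgradientAt h (-((1 / (n : ℝ)) • ∑ i, f' i xstar)) xstar)
    (x : EuclideanSpace ℝ (Fin d)) (φ : Fin n → EuclideanSpace ℝ (Fin d)) (j : Fin n) :
    ‖prox (sagaW d n γ f' x φ j) - xstar‖
      ≤ ‖sagaW d n γ f' x φ j - (xstar - γ • ((1 / (n : ℝ)) • ∑ i, f' i xstar))‖ := by
  have hw := hasSubgradientAt_of_isMinOn_add_sq hh hγ (hprox (sagaW d n γ f' x φ j))
  refine (hw.norm_sub_le hγ.le hstar).trans_eq (congrArg norm ?_)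
  rw [smul_smul, mul_inv_cancel₀ hγ.ne', one_smul, add_sub_cancel, smul_neg, ← sub_eq_add_neg]

lemma sum_norm_prox_sagaW_sub_sq_le (hn : 0 < n) (hγ : 0 < γ) (hh : ConvexOn ℝ Set.univ h)
    (hprox : ∀ w y, h (prox w) + 1 / (2 * γ) * ‖prox w - w‖ ^ 2
        ≤ h y + 1 / (2 * γ) * ‖y - w‖ ^ 2)
    (hstar : HasSubgradientAt h (-((1 / (n : ℝ)) • ∑ i, f' i xstar)) xstar)
    (x : EuclideanSpace ℝ (Fin d)) (φ : Fin n → EuclideanSpace ℝ (Fin d)) (μ : ℝ) {β : ℝ}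
    (hβ : 0 < β) :
    ∑ j, ‖prox (sagaW d n γ f' x φ j) - xstar‖ ^ 2
      ≤ n * (1 - γ ^ 2 * μ ^ 2) * ‖x - xstar‖ ^ 2
        - 2 * γ * (1 - γ * μ) * ∑ j, ⟪f' j x - f' j xstar, x - xstar⟫
        + γ ^ 2 * ((1 + β) * ∑ j, ‖(f' j x - f' j xstar) - μ • (x - xstar)‖ ^ 2
          + (1 + β⁻¹) * ∑ j, ‖f' j (φ j) - f' j xstar‖ ^ 2) := by
  set a := x - xstar
  set Δ := fun j => f' j x - f' j xstar
  set v := fun j => f' j (φ j) - f' j xstar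
  set e := fun j => Δ j - v j + (n : ℝ)⁻¹ • ∑ i, v i
  have he : ∑ j, e j = ∑ j, Δ j := by
    simp only [e, Finset.sum_add_distrib, Finset.sum_sub_distrib, Finset.sum_const,
      Finset.card_univ, Fintype.card_fin, ← Nat.cast_smul_eq_nsmul ℝ, smul_smul,
      mul_inv_cancel₀ (Nat.cast_ne_zero.2 hn.ne' : (n : ℝ) ≠ 0), one_smul, sub_add_cancel]
  have hvar := sum_norm_sub_add_mean_sq_le Δ v (μ • a) hβ
  rw [Fintype.card_fin] at hvar
  have hΔ : ∑ j, ‖Δ j‖ ^ 2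
      = ∑ j, ‖Δ j - μ • a‖ ^ 2 + 2 * μ * ∑ j, ⟪Δ j, a⟫ - n * μ ^ 2 * ‖a‖ ^ 2 := by
    simp only [norm_sub_sq_real, real_inner_smul_right, norm_smul, mul_pow, Real.norm_eq_abs,
      sq_abs, Finset.sum_add_distrib, Finset.sum_sub_distrib, ← Finset.mul_sum, Finset.sum_const,
      Finset.card_univ, Fintype.card_fin, nsmul_eq_mul]
    ring
  calc ∑ j, ‖prox (sagaW d n γ f' x φ j) - xstar‖ ^ 2
      ≤ ∑ j, ‖a - γ • e j‖ ^ 2 := by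
        refine Finset.sum_le_sum fun j _ => pow_le_pow_left₀ (norm_nonneg _) ?_ 2
        rw [← sagaW_sub_eq]
        exact norm_prox_sagaW_sub_le γ f' prox hγ hh hprox hstar x φ j
    _ = n * ‖a‖ ^ 2 - 2 * γ * ∑ j, ⟪Δ j, a⟫ + γ ^ 2 * ∑ j, ‖e j‖ ^ 2 := by
        have hj : ∀ j, ‖a - γ • e j‖ ^ 2 = ‖a‖ ^ 2 - 2 * γ * ⟪e j, a⟫ + γ ^ 2 * ‖e j‖ ^ 2 :=
          fun j => by
            rw [norm_sub_sq_real, real_inner_smul_right, norm_smul, mul_pow, Real.norm_eq_abs,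
              sq_abs, real_inner_comm]
            ring
        simp only [hj, Finset.sum_add_distrib, Finset.sum_sub_distrib, ← Finset.mul_sum,
          ← sum_inner, he, Finset.sum_const, Finset.card_univ, Fintype.card_fin, nsmul_eq_mul]
    _ ≤ _ := by
        grw [hvar, hΔ]
        apply le_of_eq
        ring

lemma sum_sagaLyapunov_sagaStep_le (hn : 0 < n) {μ Lt ρ β : ℝ} (hμ : 0 < μ) (hγ : 0 < γ)
    (hμLt : μ < Lt) (hρ : ρ ≤ γ * μ) (hβ : 0 < β)
    (hβ₁ : γ ^ 2 * (1 + β) * (Lt - μ) = γ * (1 - γ * μ))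
    (hβ₂ : γ * Lt * (1 + β⁻¹) ≤ (1 - γ * μ) * (1 - n * ρ))
    (f : Fin n → EuclideanSpace ℝ (Fin d) → ℝ)
    (hsc : ∀ i a b, μ / 2 * ‖a - b‖ ^ 2 ≤ bregmanDiv (f i) (f' i) a b)
    (hup : ∀ i a b, bregmanDiv (f i) (f' i) a b ≤ Lt / 2 * ‖a - b‖ ^ 2)
    (hh : ConvexOn ℝ Set.univ h)
    (hprox : ∀ w y, h (prox w) + 1 / (2 * γ) * ‖prox w - w‖ ^ 2
        ≤ h y + 1 / (2 * γ) * ‖y - w‖ ^ 2)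
    (hstar : HasSubgradientAt h (-((1 / (n : ℝ)) • ∑ i, f' i xstar)) xstar)
    (s : EuclideanSpace ℝ (Fin d) × (Fin n → EuclideanSpace ℝ (Fin d))) :
    ∑ j, sagaLyapunov f f' xstar (2 * γ * (1 - γ * μ)) (sagaStep γ f' prox s j)
      ≤ n * (1 - ρ) * sagaLyapunov f f' xstar (2 * γ * (1 - γ * μ)) s := by
  obtain ⟨x, φ⟩ := s
  set a := x - xstar
  set P := ∑ j, ⟪f' j x - f' j xstar, a⟫
  set Sg := ∑ j, ‖(f' j x - f' j xstar) - μ • a‖ ^ 2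
  set Sφ := ∑ i, bregmanDiv (f i) (f' i) (φ i) xstar
  set Sx := ∑ i, bregmanDiv (f i) (f' i) x xstar
  have hLt : 0 < Lt := hμ.trans hμLt
  have hdist := sum_norm_prox_sagaW_sub_sq_le γ f' prox hn hγ hh hprox hstar x φ μ hβ
  have hSv : ∑ j, ‖f' j (φ j) - f' j xstar‖ ^ 2 ≤ 2 * Lt * Sφ := by
    rw [Finset.mul_sum]
    exact Finset.sum_le_sum fun i _ => norm_sub_sq_le_bregmanDiv hLt
      (fun a b => (hsc i a b).trans' (by positivity)) (hup i) (φ i) xstar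
  have hkey : Sx + n * (μ / 2) * ‖a‖ ^ 2 + Sg / (2 * (Lt - μ)) ≤ P := by
    have := Finset.sum_le_sum fun i (_ : i ∈ Finset.univ) =>
      bregmanDiv_add_norm_sq_le_inner hμLt (hsc i) (hup i) x xstar
    simpa only [Finset.sum_add_distrib, ← Finset.sum_div, Finset.sum_const, Finset.card_univ,
      Fintype.card_fin, nsmul_eq_mul, mul_assoc] using this
  have htable : ∑ j, ∑ i, bregmanDiv (f i) (f' i) (Function.update φ j x i) xstar
      = n * Sφ - Sφ + Sx := by
    simp only [sum_apply_update (fun i y => bregmanDiv (f i) (f' i) y xstar),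
      Finset.sum_add_distrib, Finset.sum_sub_distrib, Finset.sum_const, Finset.card_univ,
      Fintype.card_fin, nsmul_eq_mul]
    rfl
  -- `hβ₁` is what makes the `Sg` term of the variance bound cancel against the gain in `hkey`
  have hSg : γ ^ 2 * (1 + β) * Sg = 2 * γ * (1 - γ * μ) * (Sg / (2 * (Lt - μ))) := by
    have : Lt - μ ≠ 0 := (sub_pos.2 hμLt).ne'
    rw [mul_assoc 2 γ, ← hβ₁]
    field_simp
  have hSφ : 0 ≤ Sφ := Finset.sum_nonneg fun i _ => (hsc i (φ i) xstar).trans' (by positivity)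
  have hγμ : 0 ≤ 1 - γ * μ := by
    refine (mul_nonneg_iff_of_pos_left hγ).1 ?_
    rw [← hβ₁]
    exact mul_nonneg (by positivity) (sub_pos.2 hμLt).le
  simp only [sagaLyapunov, sagaStep, Finset.sum_add_distrib, ← Finset.mul_sum, htable]
  nlinarith [mul_le_mul_of_nonneg_left hSv (by positivity : 0 ≤ γ ^ 2 * (1 + β⁻¹)),
    mul_le_mul_of_nonneg_left hkey (by positivity : 0 ≤ 2 * γ * (1 - γ * μ)),
    mul_le_mul_of_nonneg_right hβ₂ (by positivity : 0 ≤ 2 * γ * Sφ),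
    mul_le_mul_of_nonneg_right hρ (by positivity : 0 ≤ n * ‖a‖ ^ 2)]

theorem saga_mean_sq_dist_le (hn : 0 < n) {μ L Lt ρ C : ℝ} (hμ : 0 < μ) (hγ : 0 < γ)
    (hLLt : L ≤ Lt) (hμLt : μ < Lt) (hγLt : γ * Lt < 1) (hρ : ρ ≤ γ * μ)
    (hrate : γ * Lt ≤ (1 - γ * Lt) * (1 - n * ρ)) (hC : 2 * n * γ * (1 - γ * μ) ≤ C)
    (f : Fin n → EuclideanSpace ℝ (Fin d) → ℝ)
    (hgrad : ∀ i x, HasGradientAt (f i) (f' i x) x)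
    (hsmooth : ∀ i x y, ‖f' i x - f' i y‖ ≤ L * ‖x - y‖)
    (hsc : ∀ i x y, f i x ≥ f i y + ⟪f' i y, x - y⟫ + μ / 2 * ‖x - y‖ ^ 2)
    (hh : ConvexOn ℝ Set.univ h)
    (hstar : ∀ y, (1 / (n : ℝ)) * ∑ i, f i xstar + h xstar ≤ (1 / (n : ℝ)) * ∑ i, f i y + h y)
    (hprox : ∀ w y, h (prox w) + 1 / (2 * γ) * ‖prox w - w‖ ^ 2
        ≤ h y + 1 / (2 * γ) * ‖y - w‖ ^ 2) (k : ℕ) :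
    (1 / (n : ℝ) ^ k) * ∑ js : Fin k → Fin n,
        ‖(sagaIter d n γ f' prox x0 (extSeq hn js) k).1 - xstar‖ ^ 2
      ≤ (1 - ρ) ^ k * (‖x0 - xstar‖ ^ 2 + C *
          bregmanDiv (fun y => (1 / (n : ℝ)) * ∑ i, f i y) (fun y => (1 / (n : ℝ)) • ∑ i, f' i y)
            x0 xstar) := by
  have hsc' : ∀ i a b, μ / 2 * ‖a - b‖ ^ 2 ≤ bregmanDiv (f i) (f' i) a b := fun i a b => by
    simp only [bregmanDiv]; linarith [hsc i a b]
  have hD : ∀ i a b, 0 ≤ bregmanDiv (f i) (f' i) a b := fun i a b =>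
    (hsc' i a b).trans' (by positivity)
  have hupL : ∀ i a b, bregmanDiv (f i) (f' i) a b ≤ L / 2 * ‖a - b‖ ^ 2 :=
    fun i => bregmanDiv_le_of_lipschitz_gradient (hgrad i) (hsmooth i)
  obtain ⟨β, hβ, hβ₁, hβ₂⟩ := exists_young_weight hγ hμLt hγLt hrate
  have hstep := sum_sagaLyapunov_sagaStep_le γ f' prox hn hμ hγ hμLt hρ hβ hβ₁ hβ₂ f hsc'
    (fun i a b => (hupL i a b).trans (by gcongr)) hh hprox
    (hasSubgradientAt_neg_mean_of_isMin hn hupL hh hstar)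
  have hγμ : 0 ≤ 1 - γ * μ := by nlinarith [mul_lt_mul_of_pos_left hμLt hγ]
  have hρ₁ : 0 ≤ 1 - ρ := by nlinarith [mul_lt_mul_of_pos_left hμLt hγ]
  have hn' : (0 : ℝ) < n := Nat.cast_pos.2 hn
  have hsum := sum_sagaIter_le γ f' prox x0 hn _ (by positivity) hstep k
  have hD₀ : 0 ≤ ∑ i, bregmanDiv (f i) (f' i) x0 xstar := Finset.sum_nonneg fun i _ => hD i _ _
  rw [div_mul_eq_mul_div, one_mul, div_le_iff₀ (by positivity)]
  calc ∑ js : Fin k → Fin n, ‖(sagaIter d n γ f' prox x0 (extSeq hn js) k).1 - xstar‖ ^ 2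
      ≤ _ := Finset.sum_le_sum fun js _ => le_add_of_nonneg_right
        (mul_nonneg (by positivity) (Finset.sum_nonneg fun i _ => hD i _ _))
    _ ≤ _ := hsum
    _ = (1 - ρ) ^ k * (‖x0 - xstar‖ ^ 2 + 2 * n * γ * (1 - γ * μ) *
          ((1 / (n : ℝ)) * ∑ i, bregmanDiv (f i) (f' i) x0 xstar)) * n ^ k := by
      rw [sagaLyapunov, mul_pow]
      field_simp
    _ ≤ _ := by
      rw [bregmanDiv_mean]
      gcongr

end Saga

theorem saga_convergence_strongly_convex_general (d n k : ℕ) (hn : 0 < n) (μ L γ : ℝ)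
    (hμ : 0 < μ) (hμL : μ ≤ L)
    (f : Fin n → EuclideanSpace ℝ (Fin d) → ℝ)
    (f' : Fin n → EuclideanSpace ℝ (Fin d) → EuclideanSpace ℝ (Fin d))
    (hgrad : ∀ i x, HasGradientAt (f i) (f' i x) x)
    (hsmooth : ∀ i x y, ‖f' i x - f' i y‖ ≤ L * ‖x - y‖)
    (hsc : ∀ i x y, f i x ≥ f i y + ⟪f' i y, x - y⟫ + μ / 2 * ‖x - y‖ ^ 2)
    (h : EuclideanSpace ℝ (Fin d) → ℝ) (hh : ConvexOn ℝ Set.univ h)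
    (xstar : EuclideanSpace ℝ (Fin d))
    (hstar : ∀ y, (1 / (n : ℝ)) * ∑ i, f i xstar + h xstar
        ≤ (1 / (n : ℝ)) * ∑ i, f i y + h y)
    (prox : EuclideanSpace ℝ (Fin d) → EuclideanSpace ℝ (Fin d))
    (hprox : ∀ w y, h (prox w) + 1 / (2 * γ) * ‖prox w - w‖ ^ 2
        ≤ h y + 1 / (2 * γ) * ‖y - w‖ ^ 2)
    (x0 : EuclideanSpace ℝ (Fin d)) :
    (γ = 1 / (2 * (μ * n + L)) →
      (1 / (n : ℝ) ^ k) * ∑ js : Fin k → Fin n,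
          ‖(sagaIter d n γ f' prox x0 (extSeq hn js) k).1 - xstar‖ ^ 2
        ≤ (1 - μ / (2 * (μ * n + L))) ^ k *
            (‖x0 - xstar‖ ^ 2 + ((n : ℝ) / (μ * n + L)) *
              ((1 / (n : ℝ)) * ∑ i, f i x0
                - ⟪(1 / (n : ℝ)) • ∑ i, f' i xstar, x0 - xstar⟫
                - (1 / (n : ℝ)) * ∑ i, f i xstar))) ∧
    (γ = 1 / (3 * L) →
      (1 / (n : ℝ) ^ k) * ∑ js : Fin k → Fin n,
          ‖(sagaIter d n γ f' prox x0 (extSeq hn js) k).1 - xstar‖ ^ 2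
        ≤ (1 - min (1 / (4 * (n : ℝ))) (μ / (3 * L))) ^ k *
            (‖x0 - xstar‖ ^ 2 + (2 * (n : ℝ) / (3 * L)) *
              ((1 / (n : ℝ)) * ∑ i, f i x0
                - ⟪(1 / (n : ℝ)) • ∑ i, f' i xstar, x0 - xstar⟫
                - (1 / (n : ℝ)) * ∑ i, f i xstar))) := by
  have hL : 0 < L := hμ.trans_le hμL
  have hn' : (1 : ℝ) ≤ n := Nat.one_le_cast.2 hn
  simp only [sub_right_comm _ (inner ℝ _ _)]
  refine ⟨fun hγ => ?_, fun hγ => ?_⟩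
  · subst hγ
    refine saga_mean_sq_dist_le _ f' prox x0 hn (Lt := L + μ / 2) hμ (by positivity)
      (by linarith) (by linarith) ?_ (le_of_eq (by ring)) ?_ ?_ f hgrad hsmooth hsc hh hstar
      hprox k
    · rw [div_mul_eq_mul_div, one_mul, div_lt_one (by positivity)]
      nlinarith
    · field_simp
      nlinarith [mul_le_mul_of_nonneg_left hn' hμ.le, mul_nonneg hμ.le (sub_nonneg.2 hn'),
        mul_nonneg (mul_nonneg hμ.le (sub_nonneg.2 hn')) hL.le]
    · rw [show 2 * n * (1 / (2 * (μ * n + L))) = n / (μ * n + L) by field_simp]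
      exact mul_le_of_le_one_right (by positivity) (by simp only [sub_le_self_iff]; positivity)
  · subst hγ
    have hρn : n * min (1 / (4 * (n : ℝ))) (μ / (3 * L)) ≤ 1 / 4 :=
      calc _ ≤ n * (1 / (4 * (n : ℝ))) := by gcongr; exact min_le_left _ _
        _ = 1 / 4 := by field_simp
    have hγLt : 1 / (3 * L) * (5 * L / 4) = 5 / 12 := by field_simp; ring
    refine saga_mean_sq_dist_le _ f' prox x0 hn (Lt := 5 * L / 4) hμ (by positivity)
      (by linarith) (by linarith) (by linarith) ((min_le_right _ _).trans_eq (by ring)) ?_ ?_ f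
      hgrad hsmooth hsc hh hstar hprox k
    · rw [hγLt]
      nlinarith
    · rw [mul_one_div]
      exact mul_le_of_le_one_right (by positivity) (by simp only [sub_le_self_iff]; positivity)

theorem saga_convergence_strongly_convex (d n k : ℕ) (hn : 0 < n) (μ L γ : ℝ)
    (hμ : 0 < μ) (hμL : μ ≤ L) (hγ : 0 < γ)
    (f : Fin n → EuclideanSpace ℝ (Fin d) → ℝ)
    (f' : Fin n → EuclideanSpace ℝ (Fin d) → EuclideanSpace ℝ (Fin d))
    (hgrad : ∀ i x, HasGradientAt (f i) (f' i x) x)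
    (hconv : ∀ i, ConvexOn ℝ Set.univ (f i))
    (hsmooth : ∀ i x y, ‖f' i x - f' i y‖ ≤ L * ‖x - y‖)
    (hsc : ∀ i x y, f i x ≥ f i y + ⟪f' i y, x - y⟫ + μ / 2 * ‖x - y‖ ^ 2)
    (h : EuclideanSpace ℝ (Fin d) → ℝ) (hh : ConvexOn ℝ Set.univ h)
    (xstar : EuclideanSpace ℝ (Fin d))
    (hstar : ∀ y, (1 / (n : ℝ)) * ∑ i, f i xstar + h xstar
        ≤ (1 / (n : ℝ)) * ∑ i, f i y + h y)
    (prox : EuclideanSpace ℝ (Fin d) → EuclideanSpace ℝ (Fin d))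
    (hprox : ∀ w y, h (prox w) + 1 / (2 * γ) * ‖prox w - w‖ ^ 2
        ≤ h y + 1 / (2 * γ) * ‖y - w‖ ^ 2)
    (x0 : EuclideanSpace ℝ (Fin d)) :
    (γ = 1 / (2 * (μ * n + L)) →
      (1 / (n : ℝ) ^ k) * ∑ js : Fin k → Fin n,
          ‖(sagaIter d n γ f' prox x0 (extSeq hn js) k).1 - xstar‖ ^ 2
        ≤ (1 - μ / (2 * (μ * n + L))) ^ k *
            (‖x0 - xstar‖ ^ 2 + ((n : ℝ) / (μ * n + L)) *
              ((1 / (n : ℝ)) * ∑ i, f i x0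
                - ⟪(1 / (n : ℝ)) • ∑ i, f' i xstar, x0 - xstar⟫
                - (1 / (n : ℝ)) * ∑ i, f i xstar))) ∧
    (γ = 1 / (3 * L) →
      (1 / (n : ℝ) ^ k) * ∑ js : Fin k → Fin n,
          ‖(sagaIter d n γ f' prox x0 (extSeq hn js) k).1 - xstar‖ ^ 2
        ≤ (1 - min (1 / (4 * (n : ℝ))) (μ / (3 * L))) ^ k *
            (‖x0 - xstar‖ ^ 2 + (2 * (n : ℝ) / (3 * L)) *
              ((1 / (n : ℝ)) * ∑ i, f i x0
                - ⟪(1 / (n : ℝ)) • ∑ i, f' i xstar, x0 - xstar⟫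
                - (1 / (n : ℝ)) * ∑ i, f i xstar))) :=
  saga_convergence_strongly_convex_general d n k hn μ L γ hμ hμL f f' hgrad hsmooth hsc h hh xstar
    hstar prox hprox x0
end

section
/- For a table φ_1, …, φ_n with MISO point w, fix any index j, perform the MISO update with index j (replace φ_j by w), and let w' be the recomputed MISO point. Then ‖w' − w‖ ≤ (1 − μ/(μ + L)) · (1/n) · ‖w − φ_j‖. -/
/-!
Write `u = w - φ j` and `Δ = ∇f_j w - ∇f_j (φ j)`. Only the `j`-th entry of the table changes, so
the MISO point moves by `(u - Δ / L) / n`. The descent lemma and convexity of `f_j - μ/2 ‖·‖²`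
give the co-coercivity inequality `‖Δ‖² + μ L ‖u‖² ≤ (L + μ) ⟪Δ, u⟫`, and expanding the square with
it yields `‖u - Δ / L‖² ≤ (L - μ) / (L + μ) ‖u‖² ≤ (L / (L + μ))² ‖u‖²`.
-/

open scoped RealInnerProductSpace

/-- The MISO point associated with a table `φ`. -/
noncomputable def misoW (d n : ℕ) (L : ℝ)
    (f' : Fin n → EuclideanSpace ℝ (Fin d) → EuclideanSpace ℝ (Fin d))
    (φ : Fin n → EuclideanSpace ℝ (Fin d)) : EuclideanSpace ℝ (Fin d) :=
  (1 / (n : ℝ)) • ∑ i, φ i - (1 / (L * n)) • ∑ i, f' i (φ i)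

section QuadraticBounds

variable {E : Type*} [NormedAddCommGroup E] [InnerProductSpace ℝ E]

theorem HasGradientAt.hasDerivAt_add_smul [CompleteSpace E] {f : E → ℝ} {f' y v : E} {t : ℝ}
    (hf : HasGradientAt f f' (y + t • v)) :
    HasDerivAt (fun t : ℝ => f (y + t • v)) ⟪f', v⟫ t := by
  have hline : HasDerivAt (fun t : ℝ => y + t • v) v t := by
    simpa using ((hasDerivAt_id' t).smul_const v).const_add y
  exact hf.hasFDerivAt.comp_hasDerivAt t hline

theorem le_add_inner_add_sq_of_lipschitz_gradient [CompleteSpace E] {f : E → ℝ} {g : E → E}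
    {L : ℝ} (hg : ∀ x, HasGradientAt f (g x) x) (hlip : ∀ x y, ‖g x - g y‖ ≤ L * ‖x - y‖)
    (x y : E) :
    f x ≤ f y + ⟪g y, x - y⟫ + L / 2 * ‖x - y‖ ^ 2 := by
  set v := x - y
  -- `G` is antitone on `[0, 1]`, and `G 1 ≤ G 0` is the claim.
  let G : ℝ → ℝ := fun t => f (y + t • v) - t * ⟪g y, v⟫ - L / 2 * ‖v‖ ^ 2 * t ^ 2
  have hG : ∀ t, HasDerivAt G (⟪g (y + t • v) - g y, v⟫ - L * ‖v‖ ^ 2 * t) t := by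
    intro t
    have hderiv := ((hg (y + t • v)).hasDerivAt_add_smul.sub
      ((hasDerivAt_id' t).mul_const ⟪g y, v⟫)).sub
      ((hasDerivAt_pow 2 t).const_mul (L / 2 * ‖v‖ ^ 2))
    exact hderiv.congr_deriv (by rw [inner_sub_left]; ring)
  have hderiv_nonpos : ∀ t, 0 ≤ t → ⟪g (y + t • v) - g y, v⟫ - L * ‖v‖ ^ 2 * t ≤ 0 := by
    intro t ht
    have hlip_t : ‖g (y + t • v) - g y‖ ≤ L * (t * ‖v‖) := by
      simpa [norm_smul, abs_of_nonneg ht] using hlip (y + t • v) y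
    nlinarith [real_inner_le_norm (g (y + t • v) - g y) v,
      mul_le_mul_of_nonneg_right hlip_t (norm_nonneg v)]
  have hanti : AntitoneOn G (Set.Icc 0 1) :=
    antitoneOn_of_hasDerivWithinAt_nonpos (convex_Icc 0 1)
      (fun t _ => (hG t).continuousAt.continuousWithinAt) (fun t _ => (hG t).hasDerivWithinAt)
      (fun t ht => hderiv_nonpos t (interior_subset ht).1)
  have hG10 := hanti (Set.left_mem_Icc.2 zero_le_one) (Set.right_mem_Icc.2 zero_le_one) zero_le_one
  simp only [G, v, one_smul, zero_smul, add_zero, add_sub_cancel] at hG10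
  linarith

theorem sq_norm_sub_le_mul_inner_of_convex_of_le_quadratic {h : E → ℝ} {g : E → E} {M : ℝ}
    (hM : 0 ≤ M) (hconv : ∀ x y, h y + ⟪g y, x - y⟫ ≤ h x)
    (hupper : ∀ x y, h x ≤ h y + ⟪g y, x - y⟫ + M / 2 * ‖x - y‖ ^ 2) (x y : E) :
    ‖g x - g y‖ ^ 2 ≤ M * ⟪g x - g y, x - y⟫ := by
  set Δ := g x - g y
  -- Compare `h` at `a - s • Δ` from above (around `a`) and from below (around `b`).
  have hstep : ∀ (s : ℝ) (a b : E), s * ⟪g a - g b, Δ⟫ ≤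
      h a - h b - ⟪g b, a - b⟫ + M / 2 * s ^ 2 * ‖Δ‖ ^ 2 := by
    intro s a b
    have hup := hupper (a - s • Δ) a
    have hlow := hconv (a - s • Δ) b
    rw [show a - s • Δ - a = -(s • Δ) by abel, norm_neg, norm_smul, inner_neg_right,
      real_inner_smul_right, mul_pow, Real.norm_eq_abs, sq_abs] at hup
    rw [show a - s • Δ - b = (a - b) - s • Δ by abel, inner_sub_right,
      real_inner_smul_right] at hlow
    rw [inner_sub_left]
    linarith
  have hquad : ∀ t : ℝ, 0 ≤ (M * ‖Δ‖ ^ 2) * (t * t) + (-2 * ‖Δ‖ ^ 2) * t + ⟪Δ, x - y⟫ := by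
    intro t
    have h₁ := hstep t x y
    have h₂ := hstep (-t) y x
    have hΔΔ : ⟪Δ, Δ⟫ = ‖Δ‖ ^ 2 := real_inner_self_eq_norm_sq Δ
    have hsymm : ⟪g y - g x, Δ⟫ = -‖Δ‖ ^ 2 := by
      rw [← neg_sub, inner_neg_left, hΔΔ]
    have hcross : ⟪g x, y - x⟫ + ⟪g y, x - y⟫ = -⟪Δ, x - y⟫ := by
      rw [show y - x = -(x - y) by abel, inner_neg_right, inner_sub_left]; ring
    rw [hΔΔ] at h₁
    rw [hsymm] at h₂
    nlinarith
  -- The discriminant argument avoids dividing by `M`, which may vanish.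
  have hdiscrim := discrim_le_zero hquad
  have hmono : 0 ≤ ⟪Δ, x - y⟫ := by simpa using hquad 0
  rw [discrim] at hdiscrim
  nlinarith [sq_nonneg ‖Δ‖, mul_nonneg hM hmono]

theorem sq_norm_sub_add_mul_sq_norm_sub_le_inner {f : E → ℝ} {g : E → E} {μ L : ℝ}
    (hμL : μ ≤ L) (hlower : ∀ x y, f x ≥ f y + ⟪g y, x - y⟫ + μ / 2 * ‖x - y‖ ^ 2)
    (hupper : ∀ x y, f x ≤ f y + ⟪g y, x - y⟫ + L / 2 * ‖x - y‖ ^ 2) (x y : E) :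
    ‖g x - g y‖ ^ 2 + μ * L * ‖x - y‖ ^ 2 ≤ (L + μ) * ⟪g x - g y, x - y⟫ := by
  have hshift : ∀ x y : E, f y - μ / 2 * ‖y‖ ^ 2 + ⟪g y - μ • y, x - y⟫ =
      f y + ⟪g y, x - y⟫ + μ / 2 * ‖x - y‖ ^ 2 - μ / 2 * ‖x‖ ^ 2 := by
    intro x y
    rw [inner_sub_left (g y), real_inner_smul_left, inner_sub_right y, real_inner_self_eq_norm_sq,
      norm_sub_sq_real, real_inner_comm x y]
    ring
  -- The convex case, for `f - μ/2 ‖·‖²` with gradient `g - μ • id`.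
  have hco := sq_norm_sub_le_mul_inner_of_convex_of_le_quadratic (sub_nonneg.2 hμL)
    (h := fun x => f x - μ / 2 * ‖x‖ ^ 2) (g := fun x => g x - μ • x)
    (fun x y => by rw [hshift]; linarith [hlower x y])
    (fun x y => by rw [hshift]; linarith [hupper x y]) x y
  rw [show g x - μ • x - (g y - μ • y) = (g x - g y) - μ • (x - y) by rw [smul_sub]; abel] at hco
  generalize g x - g y = Δ at hco ⊢
  generalize x - y = u at hco ⊢
  rw [norm_sub_sq_real, inner_sub_left, real_inner_smul_left, real_inner_smul_right, norm_smul,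
    mul_pow, Real.norm_eq_abs, sq_abs, real_inner_self_eq_norm_sq] at hco
  linarith

theorem norm_sub_inv_smul_le_of_sq_norm_add_le_inner {u Δ : E} {μ L : ℝ} (hμ : 0 ≤ μ)
    (hμL : μ ≤ L) (hL : 0 < L) (hco : ‖Δ‖ ^ 2 + μ * L * ‖u‖ ^ 2 ≤ (L + μ) * ⟪Δ, u⟫) :
    ‖u - L⁻¹ • Δ‖ ≤ L / (L + μ) * ‖u‖ := by
  have hLμ : 0 < L + μ := by linarith
  have hsq : ((L + μ) * ‖L • u - Δ‖) ^ 2 ≤ (L ^ 2 * ‖u‖) ^ 2 := by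
    rw [mul_pow, norm_sub_sq_real, norm_smul, real_inner_smul_left, real_inner_comm Δ u,
      Real.norm_eq_abs, abs_of_pos hL]
    have hscaled := mul_le_mul_of_nonneg_left hco (by positivity : 0 ≤ 2 * L * (L + μ))
    nlinarith [sq_nonneg ‖Δ‖, sq_nonneg ‖u‖, mul_nonneg (sub_nonneg.2 hμL) (sq_nonneg ‖Δ‖),
      mul_nonneg (mul_nonneg (sq_nonneg L) (sq_nonneg μ)) (sq_nonneg ‖u‖)]
  have hle := (pow_le_pow_iff_left₀ (by positivity) (by positivity) two_ne_zero).1 hsq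
  rw [show u - L⁻¹ • Δ = L⁻¹ • (L • u - Δ) by rw [smul_sub, smul_smul, inv_mul_cancel₀ hL.ne',
    one_smul], norm_smul, Real.norm_eq_abs, abs_of_pos (inv_pos.2 hL), div_mul_eq_mul_div,
    le_div_iff₀ hLμ]
  calc L⁻¹ * ‖L • u - Δ‖ * (L + μ) = L⁻¹ * ((L + μ) * ‖L • u - Δ‖) := by ring
    _ ≤ L⁻¹ * (L ^ 2 * ‖u‖) := by gcongr
    _ = L * ‖u‖ := by field_simp

end QuadraticBounds

theorem Finset.sum_update_sub_sum {ι M : Type*} [Fintype ι] [DecidableEq ι] [AddCommGroup M]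
    (φ : ι → M) (j : ι) (p : M) : ∑ i, Function.update φ j p i - ∑ i, φ i = p - φ j := by
  rw [Finset.sum_update_of_mem (Finset.mem_univ j), ← Finset.add_sum_erase _ _ (Finset.mem_univ j),
    Finset.sdiff_singleton_eq_erase]
  abel

theorem misoW_update_sub (d n : ℕ) (L : ℝ)
    (f' : Fin n → EuclideanSpace ℝ (Fin d) → EuclideanSpace ℝ (Fin d))
    (φ : Fin n → EuclideanSpace ℝ (Fin d)) (j : Fin n) (p : EuclideanSpace ℝ (Fin d)) :
    misoW d n L f' (Function.update φ j p) - misoW d n L f' φ =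
      (n : ℝ)⁻¹ • (p - φ j - L⁻¹ • (f' j p - f' j (φ j))) := by
  have hgrad_sum :
      ∑ i, f' i (Function.update φ j p i) - ∑ i, f' i (φ i) = f' j p - f' j (φ j) := by
    simpa only [← Function.apply_update] using
      Finset.sum_update_sub_sum (fun i => f' i (φ i)) j (f' j p)
  rw [← Finset.sum_update_sub_sum φ j p, ← hgrad_sum]
  simp only [misoW]
  module

theorem miso_descent_lemma_general (d n : ℕ) (μ L : ℝ)
    (hμ : 0 < μ) (hμL : μ ≤ L)
    (f : Fin n → EuclideanSpace ℝ (Fin d) → ℝ)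
    (f' : Fin n → EuclideanSpace ℝ (Fin d) → EuclideanSpace ℝ (Fin d))
    (hgrad : ∀ i x, HasGradientAt (f i) (f' i x) x)
    (hsmooth : ∀ i x y, ‖f' i x - f' i y‖ ≤ L * ‖x - y‖)
    (hsc : ∀ i x y, f i x ≥ f i y + ⟪f' i y, x - y⟫ + μ / 2 * ‖x - y‖ ^ 2)
    (φ : Fin n → EuclideanSpace ℝ (Fin d)) (j : Fin n) :
    ‖misoW d n L f' (Function.update φ j (misoW d n L f' φ)) - misoW d n L f' φ‖
      ≤ (1 - μ / (μ + L)) * (1 / (n : ℝ)) * ‖misoW d n L f' φ - φ j‖ := by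
  set w := misoW d n L f' φ
  have hL : 0 < L := hμ.trans_le hμL
  have hco := sq_norm_sub_add_mul_sq_norm_sub_le_inner hμL (hsc j)
    (le_add_inner_add_sq_of_lipschitz_gradient (hgrad j) (hsmooth j)) w (φ j)
  have hcontract := norm_sub_inv_smul_le_of_sq_norm_add_le_inner hμ.le hμL hL hco
  have hfactor : 1 - μ / (μ + L) = L / (L + μ) := by field_simp; ring
  rw [misoW_update_sub, norm_smul, Real.norm_eq_abs, abs_of_nonneg (by positivity), hfactor,
    one_div]
  calc (n : ℝ)⁻¹ * ‖w - φ j - L⁻¹ • (f' j w - f' j (φ j))‖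
      ≤ (n : ℝ)⁻¹ * (L / (L + μ) * ‖w - φ j‖) := by gcongr
    _ = L / (L + μ) * (n : ℝ)⁻¹ * ‖w - φ j‖ := by ring

theorem miso_descent_lemma (d n : ℕ) (hn : 1 ≤ n) (μ L : ℝ)
    (hμ : 0 < μ) (hμL : μ ≤ L)
    (f : Fin n → EuclideanSpace ℝ (Fin d) → ℝ)
    (f' : Fin n → EuclideanSpace ℝ (Fin d) → EuclideanSpace ℝ (Fin d))
    (hgrad : ∀ i x, HasGradientAt (f i) (f' i x) x)
    (hsmooth : ∀ i x y, ‖f' i x - f' i y‖ ≤ L * ‖x - y‖)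
    (hsc : ∀ i x y, f i x ≥ f i y + ⟪f' i y, x - y⟫ + μ / 2 * ‖x - y‖ ^ 2)
    (φ : Fin n → EuclideanSpace ℝ (Fin d)) (j : Fin n) :
    ‖misoW d n L f' (Function.update φ j (misoW d n L f' φ)) - misoW d n L f' φ‖
      ≤ (1 - μ / (μ + L)) * (1 / (n : ℝ)) * ‖misoW d n L f' φ - φ j‖ :=
  miso_descent_lemma_general d n μ L hμ hμL f f' hgrad hsmooth hsc φ j
end

section
/- Let f : ℝ^d → ℝ be differentiable, L-smooth and μ-strongly convex with 0 < μ < L. Then for all x, y ∈ ℝ^d: f(x) ≥ f(y) + ⟨∇f(y), x − y⟩ + (1/(2(L − μ)))‖∇f(x) − ∇f(y)‖² + (μL/(2(L − μ)))‖x − y‖² + (μ/(L − μ))⟨∇f(x) − ∇f(y), y − x⟩. -/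
open scoped RealInnerProductSpace

/-!
Subtracting `μ/2 ‖·‖²` from `f` gives a convex function `g` with gradient `f' - μ • id`, and the
descent lemma for `f` (constant `L`) becomes a quadratic upper bound for `g` with constant `L - μ`.
For a convex `g` with a quadratic upper bound of constant `C`, testing convexity at the point
`x - C⁻¹ • (∇g x - ∇g y)` gives `g y + ⟪∇g y, x - y⟫ + ‖∇g x - ∇g y‖² / (2C) ≤ g x`.
Rewritten in terms of `f`, this is the claim.
-/

section

variable {E : Type*} [NormedAddCommGroup E] [InnerProductSpace ℝ E]

theorem half_mul_norm_sq_sub_sub_inner_smul (μ : ℝ) (a b : E) :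
    μ / 2 * ‖a‖ ^ 2 - μ / 2 * ‖b‖ ^ 2 - ⟪μ • b, a - b⟫ = μ / 2 * ‖a - b‖ ^ 2 := by
  rw [norm_sub_sq_real, real_inner_smul_left, inner_sub_right, real_inner_self_eq_norm_sq,
    real_inner_comm]
  ring

theorem norm_sub_smul_sub_sub_smul_sq (μ : ℝ) (a b x y : E) :
    ‖(a - μ • x) - (b - μ • y)‖ ^ 2
      = ‖a - b‖ ^ 2 - 2 * μ * ⟪a - b, x - y⟫ + μ ^ 2 * ‖x - y‖ ^ 2 := by
  rw [show (a - μ • x) - (b - μ • y) = (a - b) - μ • (x - y) by rw [smul_sub]; abel,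
    norm_sub_sq_real, real_inner_smul_right, norm_smul, Real.norm_eq_abs, mul_pow, sq_abs]
  ring

theorem add_inner_add_norm_sub_sq_le_of_convex_of_quadratic_upper_bound
    {g : E → ℝ} {g' : E → E} {C : ℝ} (hC : 0 < C) (hconv : ∀ a b, g b + ⟪g' b, a - b⟫ ≤ g a)
    (hupper : ∀ a b, g a ≤ g b + ⟪g' b, a - b⟫ + C / 2 * ‖a - b‖ ^ 2) (x y : E) :
    g y + ⟪g' y, x - y⟫ + 1 / (2 * C) * ‖g' x - g' y‖ ^ 2 ≤ g x := by
  set w := g' x - g' y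
  set z := x - C⁻¹ • w
  have hlow := hconv z y
  have hup := hupper z x
  have hzy : ⟪g' y, z - y⟫ = ⟪g' y, x - y⟫ - C⁻¹ * ⟪g' y, w⟫ := by
    rw [show z - y = (x - y) - C⁻¹ • w by simp only [z]; abel, inner_sub_right,
      real_inner_smul_right]
  have hzx : z - x = -(C⁻¹ • w) := by simp only [z]; abel
  have hzx_inner : ⟪g' x, z - x⟫ = -(C⁻¹ * ⟪g' x, w⟫) := by
    rw [hzx, inner_neg_right, real_inner_smul_right]
  have hzx_norm : ‖z - x‖ ^ 2 = C⁻¹ ^ 2 * ‖w‖ ^ 2 := by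
    rw [hzx, norm_neg, norm_smul, Real.norm_of_nonneg (inv_nonneg.2 hC.le), mul_pow]
  have hw : ⟪g' x, w⟫ - ⟪g' y, w⟫ = ‖w‖ ^ 2 := by
    rw [← inner_sub_left, real_inner_self_eq_norm_sq]
  rw [hzy] at hlow
  rw [hzx_inner, hzx_norm] at hup
  have hgap : C⁻¹ * (⟪g' x, w⟫ - ⟪g' y, w⟫) - C / 2 * (C⁻¹ ^ 2 * ‖w‖ ^ 2)
      = 1 / (2 * C) * ‖w‖ ^ 2 := by
    rw [hw]; field_simp; ring
  linarith

variable [CompleteSpace E]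

theorem HasGradientAt.hasDerivAt_comp_add_smul {f : E → ℝ} {g y v : E} {t : ℝ}
    (hf : HasGradientAt f g (y + t • v)) :
    HasDerivAt (fun s : ℝ => f (y + s • v)) ⟪g, v⟫ t := by
  have hline : HasDerivAt (fun s : ℝ => y + s • v) v t := by
    simpa using ((hasDerivAt_id t).smul_const v).const_add y
  have h := hf.hasFDerivAt.comp_hasDerivAt t hline
  simp only [InnerProductSpace.toDual_apply_apply] at h
  exact h

theorem le_add_inner_add_half_mul_sq_of_gradient_lipschitz {f : E → ℝ} {f' : E → E} {C : ℝ}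
    (hf : ∀ x, HasGradientAt f (f' x) x) (hlip : ∀ a b, ‖f' a - f' b‖ ≤ C * ‖a - b‖)
    (x y : E) :
    f x ≤ f y + ⟪f' y, x - y⟫ + C / 2 * ‖x - y‖ ^ 2 := by
  set v := x - y
  set φ : ℝ → ℝ := fun t => f (y + t • v) - t * ⟪f' y, v⟫ - C / 2 * t ^ 2 * ‖v‖ ^ 2
  have hφ : ∀ t, HasDerivAt φ (⟪f' (y + t • v), v⟫ - ⟪f' y, v⟫ - C * t * ‖v‖ ^ 2) t := by
    intro t
    have h := (((hf (y + t • v)).hasDerivAt_comp_add_smul).sub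
      ((hasDerivAt_id t).mul_const ⟪f' y, v⟫)).sub
      (((hasDerivAt_pow 2 t).const_mul (C / 2)).mul_const (‖v‖ ^ 2))
    exact h.congr_deriv (by simp only [Nat.cast_ofNat, Nat.add_one_sub_one, pow_one]; ring)
  have hφ_nonpos : ∀ t ∈ interior (Set.Ici (0 : ℝ)),
      ⟪f' (y + t • v), v⟫ - ⟪f' y, v⟫ - C * t * ‖v‖ ^ 2 ≤ 0 := by
    intro t ht
    rw [interior_Ici] at ht
    rw [sub_nonpos]
    calc ⟪f' (y + t • v), v⟫ - ⟪f' y, v⟫ = ⟪f' (y + t • v) - f' y, v⟫ :=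
          (inner_sub_left ..).symm
      _ ≤ ‖f' (y + t • v) - f' y‖ * ‖v‖ := real_inner_le_norm _ _
      _ ≤ C * ‖(y + t • v) - y‖ * ‖v‖ := by gcongr; exact hlip _ _
      _ = C * t * ‖v‖ ^ 2 := by
        rw [add_sub_cancel_left, norm_smul, Real.norm_of_nonneg ht.le]; ring
  have hanti : AntitoneOn φ (Set.Ici 0) :=
    antitoneOn_of_hasDerivWithinAt_nonpos (convex_Ici 0)
      (fun t _ => (hφ t).continuousAt.continuousWithinAt)
      (fun t _ => (hφ t).hasDerivWithinAt) hφ_nonpos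
  have h01 : φ 1 ≤ φ 0 := hanti Set.self_mem_Ici (Set.mem_Ici.2 zero_le_one) zero_le_one
  simp only [φ, one_smul, zero_smul, add_zero, add_sub_cancel, one_mul, one_pow, zero_mul,
    sub_zero, v] at h01
  linarith

theorem add_inner_add_norm_sub_sq_le_of_strongConvex_of_lipschitz
    {f : E → ℝ} {f' : E → E} {μ L : ℝ} (hμL : μ < L)
    (hf : ∀ x, HasGradientAt f (f' x) x) (hlip : ∀ a b, ‖f' a - f' b‖ ≤ L * ‖a - b‖)
    (hsc : ∀ a b, f b + ⟪f' b, a - b⟫ + μ / 2 * ‖a - b‖ ^ 2 ≤ f a) (x y : E) :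
    f y + ⟪f' y, x - y⟫ + 1 / (2 * (L - μ)) * ‖f' x - f' y‖ ^ 2
      + μ * L / (2 * (L - μ)) * ‖x - y‖ ^ 2 + μ / (L - μ) * ⟪f' x - f' y, y - x⟫ ≤ f x := by
  set g : E → ℝ := fun z => f z - μ / 2 * ‖z‖ ^ 2
  set g' : E → E := fun z => f' z - μ • z
  have hbregman : ∀ a b, g a - g b - ⟪g' b, a - b⟫
      = f a - f b - ⟪f' b, a - b⟫ - μ / 2 * ‖a - b‖ ^ 2 := by
    intro a b
    have := half_mul_norm_sq_sub_sub_inner_smul μ a b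
    simp only [g, g', inner_sub_left]
    linarith
  have hK : 0 < L - μ := sub_pos.2 hμL
  have hconv : ∀ a b, g b + ⟪g' b, a - b⟫ ≤ g a := fun a b => by
    linarith [hsc a b, hbregman a b]
  have hupper : ∀ a b, g a ≤ g b + ⟪g' b, a - b⟫ + (L - μ) / 2 * ‖a - b‖ ^ 2 := fun a b => by
    linarith [le_add_inner_add_half_mul_sq_of_gradient_lipschitz hf hlip a b, hbregman a b]
  have hg := add_inner_add_norm_sub_sq_le_of_convex_of_quadratic_upper_bound hK hconv hupper x y
  rw [norm_sub_smul_sub_sub_smul_sq] at hg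
  have hyx : ⟪f' x - f' y, y - x⟫ = -⟪f' x - f' y, x - y⟫ := by
    rw [← inner_neg_right, neg_sub]
  have hcoeff : 1 / (2 * (L - μ)) * (‖f' x - f' y‖ ^ 2 - 2 * μ * ⟪f' x - f' y, x - y⟫
        + μ ^ 2 * ‖x - y‖ ^ 2) + μ / 2 * ‖x - y‖ ^ 2
      = 1 / (2 * (L - μ)) * ‖f' x - f' y‖ ^ 2 + μ * L / (2 * (L - μ)) * ‖x - y‖ ^ 2
        + μ / (L - μ) * -⟪f' x - f' y, x - y⟫ := by
    field_simp
    ring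
  rw [hyx]
  linarith [hbregman x y]

end

theorem full_strong_lower_bound_general (d : ℕ) (μ L : ℝ) (hμL : μ < L)
    (f : EuclideanSpace ℝ (Fin d) → ℝ)
    (f' : EuclideanSpace ℝ (Fin d) → EuclideanSpace ℝ (Fin d))
    (hgrad : ∀ x, HasGradientAt f (f' x) x)
    (hsmooth : ∀ x y, ‖f' x - f' y‖ ≤ L * ‖x - y‖)
    (hsc : ∀ x y, f x ≥ f y + ⟪f' y, x - y⟫ + μ / 2 * ‖x - y‖ ^ 2)
    (x y : EuclideanSpace ℝ (Fin d)) :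
    f x ≥ f y + ⟪f' y, x - y⟫
      + (1 / (2 * (L - μ))) * ‖f' x - f' y‖ ^ 2
      + (μ * L / (2 * (L - μ))) * ‖x - y‖ ^ 2
      + (μ / (L - μ)) * ⟪f' x - f' y, y - x⟫ :=
  add_inner_add_norm_sub_sq_le_of_strongConvex_of_lipschitz hμL hgrad hsmooth hsc x y

theorem full_strong_lower_bound (d : ℕ) (μ L : ℝ) (hμ : 0 < μ) (hμL : μ < L)
    (f : EuclideanSpace ℝ (Fin d) → ℝ)
    (f' : EuclideanSpace ℝ (Fin d) → EuclideanSpace ℝ (Fin d))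
    (hgrad : ∀ x, HasGradientAt f (f' x) x)
    (hsmooth : ∀ x y, ‖f' x - f' y‖ ≤ L * ‖x - y‖)
    (hsc : ∀ x y, f x ≥ f y + ⟪f' y, x - y⟫ + μ / 2 * ‖x - y‖ ^ 2)
    (x y : EuclideanSpace ℝ (Fin d)) :
    f x ≥ f y + ⟪f' y, x - y⟫
      + (1 / (2 * (L - μ))) * ‖f' x - f' y‖ ^ 2
      + (μ * L / (2 * (L - μ))) * ‖x - y‖ ^ 2
      + (μ / (L - μ)) * ⟪f' x - f' y, y - x⟫ :=
  full_strong_lower_bound_general d μ L hμL f f' hgrad hsmooth hsc x y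
end
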